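/- arXiv:1003.3980 — 2 statements merged into one kernel-verified Lean document; each statement's English description precedes it below -/
import Mathlib

section
/- Existence of the inner collinear equilibrium point L₁: assume μ ∈ (0,1), q₁ > 0, A₂ ≥ 0, M_b ≥ 0, T > 0 and n > 0. Then there exists x₀ with −μ < x₀ < 1−μ such that ∂Ω/∂x(x₀, 0) = 0, i.e. g(x₀) = 0 where g(x) = n²x − (1−μ)q₁(x+μ)/|x+μ|³ − μ(x+μ−1)/|x+μ−1|³ − (3/2)μA₂(x+μ−1)/|x+μ−1|⁵ − M_b x/(x²+T²)^{3/2}. (The proof follows from the intermediate value theorem, since g(x) → −∞ as x → (−μ)⁺ and g(x) → +∞ as x → (1−μ)⁻.) -/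
/-! On the open segment between the primaries `gfun` is continuous and is `∂Ω/∂x` along the axis.
Near `-μ` it is dominated by the attraction `-(1 - μ) q₁ / (x + μ)²` of the first primary and
tends to `-∞`; near `1 - μ` the attraction `μ / (1 - μ - x)²` of the second primary, reinforced by
the non-negative oblateness term, sends it to `+∞`. The intermediate value theorem gives a zero. -/

open Filter Topology Set

/-- Effective potential of the generalized Chermnykh-like problem:
`Ω(x,y) = n²(x²+y²)/2 + (1−μ)q₁/r₁ + μ/r₂ + μA₂/(2r₂³) + M_b/(r²+T²)^{1/2}`,
with `r₁ = √((x+μ)²+y²)`, `r₂ = √((x+μ−1)²+y²)`, `r = √(x²+y²)`. -/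
noncomputable def Omega (μ q₁ A₂ Mb T n x y : ℝ) : ℝ :=
  n ^ 2 * (x ^ 2 + y ^ 2) / 2
    + (1 - μ) * q₁ / Real.sqrt ((x + μ) ^ 2 + y ^ 2)
    + μ / Real.sqrt ((x + μ - 1) ^ 2 + y ^ 2)
    + μ * A₂ / (2 * Real.sqrt ((x + μ - 1) ^ 2 + y ^ 2) ^ 3)
    + Mb / Real.sqrt (x ^ 2 + y ^ 2 + T ^ 2)

/-- Restriction of `∂Ω/∂x` to the x-axis:
`g(x) = n²x − (1−μ)q₁(x+μ)/|x+μ|³ − μ(x+μ−1)/|x+μ−1|³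
       − (3/2)μA₂(x+μ−1)/|x+μ−1|⁵ − M_b·x/(x²+T²)^{3/2}`. -/
noncomputable def gfun (μ q₁ A₂ Mb T n x : ℝ) : ℝ :=
  n ^ 2 * x - (1 - μ) * q₁ * (x + μ) / |x + μ| ^ 3
    - μ * (x + μ - 1) / |x + μ - 1| ^ 3
    - (3 / 2) * μ * A₂ * (x + μ - 1) / |x + μ - 1| ^ 5
    - Mb * x / Real.sqrt (x ^ 2 + T ^ 2) ^ 3

theorem hasDerivAt_div_sqrt_sq_add_pow (a c : ℝ) (k : ℕ) {x : ℝ} (hx : 0 < x ^ 2 + c) :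
    HasDerivAt (fun s => a / √(s ^ 2 + c) ^ k) (-(k * a * x) / √(x ^ 2 + c) ^ (k + 2)) x := by
  have hr : 0 < √(x ^ 2 + c) := Real.sqrt_pos.2 hx
  have hsqrt : HasDerivAt (fun s => √(s ^ 2 + c)) (x / √(x ^ 2 + c)) x := by
    convert ((hasDerivAt_pow 2 x).add_const c).sqrt hx.ne' using 1
    field_simp
    ring
  refine ((hasDerivAt_const x a).fun_div (hsqrt.fun_pow k) (pow_ne_zero k hr.ne')).congr_deriv ?_
  rcases k with _ | m
  · simp
  · rw [Nat.add_sub_cancel]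
    field_simp
    ring

theorem tendsto_div_abs_pow_three_nhdsGT_zero :
    Tendsto (fun u : ℝ => u / |u| ^ 3) (𝓝[>] 0) atTop := by
  refine (tendsto_inv_nhdsGT_zero.atTop_mul_atTop₀ tendsto_inv_nhdsGT_zero).congr' ?_
  filter_upwards [self_mem_nhdsWithin] with u (hu : 0 < u)
  rw [abs_of_pos hu]
  field_simp

theorem tendsto_div_abs_pow_three_nhdsLT_zero :
    Tendsto (fun u : ℝ => u / |u| ^ 3) (𝓝[<] 0) atBot := by
  refine (tendsto_neg_atTop_atBot.comp
    (tendsto_inv_nhdsLT_zero.atBot_mul_atBot₀ tendsto_inv_nhdsLT_zero)).congr' ?_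
  filter_upwards [self_mem_nhdsWithin] with u (hu : u < 0)
  rw [Function.comp_apply, abs_of_neg hu]
  field_simp

theorem exists_mem_Ioo_eq_zero_of_tendsto {f : ℝ → ℝ} {a b : ℝ} (hab : a < b)
    (hf : ContinuousOn f (Ioo a b)) (ha : Tendsto f (𝓝[>] a) atBot)
    (hb : Tendsto f (𝓝[<] b) atTop) : ∃ x ∈ Ioo a b, f x = 0 := by
  rw [← nhdsWithin_Ioo_eq_nhdsGT hab] at ha
  rw [← nhdsWithin_Ioo_eq_nhdsLT hab] at hb
  have := left_nhdsWithin_Ioo_neBot hab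
  have := right_nhdsWithin_Ioo_neBot hab
  exact isPreconnected_Ioo.intermediate_value_Iii (l₁ := 𝓝[Ioo a b] a) (l₂ := 𝓝[Ioo a b] b)
    inf_le_right inf_le_right hf ha hb (mem_univ 0)

section

variable {μ q₁ A₂ Mb T n : ℝ}

theorem hasDerivAt_Omega_gfun {x : ℝ} (hT : T ≠ 0) (h₁ : x + μ ≠ 0)
    (h₂ : x + μ - 1 ≠ 0) :
    HasDerivAt (fun s => Omega μ q₁ A₂ Mb T n s 0) (gfun μ q₁ A₂ Mb T n x) x := by
  -- every distance is written `√(u ^ 2 + c)`: `c = 0` at the primaries, `c = T ^ 2` for the belt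
  have hpos : ∀ {u : ℝ}, u ≠ 0 → 0 < u ^ 2 + 0 := fun hu => by positivity
  have h₂' : x + (μ - 1) ≠ 0 := by rwa [← add_sub_assoc]
  have d₁ := (hasDerivAt_pow 2 x).const_mul (n ^ 2 / 2)
  have d₂ := (hasDerivAt_div_sqrt_sq_add_pow ((1 - μ) * q₁) 0 1 (hpos h₁)).comp_add_const x μ
  have d₃ := (hasDerivAt_div_sqrt_sq_add_pow μ 0 1 (hpos h₂')).comp_add_const x (μ - 1)
  have d₄ := (hasDerivAt_div_sqrt_sq_add_pow (μ * A₂ / 2) 0 3 (hpos h₂')).comp_add_const x (μ - 1)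
  have d₅ := hasDerivAt_div_sqrt_sq_add_pow Mb (T ^ 2) 1 (x := x) (by positivity)
  refine ((((((d₁.add d₂).add d₃).add d₄).add d₅).congr_deriv ?_).congr_of_eventuallyEq
    (Eventually.of_forall fun s => ?_))
  · simp only [gfun, Real.sqrt_sq_eq_abs, add_zero, add_sub_assoc]
    push_cast
    ring
  · simp only [Omega, Pi.add_apply, ne_eq, OfNat.ofNat_ne_zero, not_false_eq_true, zero_pow,
      add_zero, pow_one, add_sub_assoc]
    ring

theorem continuousAt_gfun {x : ℝ} (hT : T ≠ 0) (h₁ : x + μ ≠ 0)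
    (h₂ : x + μ - 1 ≠ 0) : ContinuousAt (gfun μ q₁ A₂ Mb T n) x := by
  unfold gfun
  fun_prop (disch := first | positivity | simpa)

theorem tendsto_gfun_nhdsGT_neg_atBot (hμ : μ < 1) (hq : 0 < q₁) (hT : T ≠ 0) :
    Tendsto (gfun μ q₁ A₂ Mb T n) (𝓝[>] (-μ)) atBot := by
  have hrest : ContinuousAt (fun x => n ^ 2 * x - μ * (x + μ - 1) / |x + μ - 1| ^ 3
      - 3 / 2 * μ * A₂ * (x + μ - 1) / |x + μ - 1| ^ 5 - Mb * x / √(x ^ 2 + T ^ 2) ^ 3) (-μ) := by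
    fun_prop (disch := first | positivity | norm_num)
  have hshift : Tendsto (· + μ) (𝓝[>] (-μ)) (𝓝[>] 0) := by
    have := (map_add_right_nhdsGT (c := μ) (a := -μ)).le
    rwa [neg_add_cancel] at this
  have hpole := (tendsto_div_abs_pow_three_nhdsGT_zero.comp hshift).const_mul_atTop
    (mul_pos (sub_pos.2 hμ) hq)
  refine ((hrest.tendsto.mono_left nhdsWithin_le_nhds).add_atBot
    (tendsto_neg_atTop_atBot.comp hpole)).congr fun x => ?_
  simp only [gfun, Function.comp_apply]
  ring

theorem tendsto_gfun_nhdsLT_one_sub_atTop (hμ : 0 < μ) (hA : 0 ≤ A₂)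
    (hT : T ≠ 0) : Tendsto (gfun μ q₁ A₂ Mb T n) (𝓝[<] (1 - μ)) atTop := by
  have hrest : ContinuousAt (fun x => n ^ 2 * x - (1 - μ) * q₁ * (x + μ) / |x + μ| ^ 3
      - Mb * x / √(x ^ 2 + T ^ 2) ^ 3) (1 - μ) := by
    fun_prop (disch := first | positivity | norm_num)
  have hshift : Tendsto (· + (μ - 1)) (𝓝[<] (1 - μ)) (𝓝[<] 0) := by
    have := (map_add_right_nhdsLT (c := μ - 1) (a := 1 - μ)).le
    rwa [sub_add_sub_cancel', sub_self] at this
  have hpole := (tendsto_div_abs_pow_three_nhdsLT_zero.comp hshift).const_mul_atBot hμ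
  refine tendsto_atTop_mono' _ ?_ ((hrest.tendsto.mono_left nhdsWithin_le_nhds).add_atTop
    (tendsto_neg_atBot_atTop.comp hpole))
  filter_upwards [self_mem_nhdsWithin] with x (hx : x < 1 - μ)
  have hu : x + μ - 1 < 0 := by linarith
  have hA₂ : 0 ≤ -(3 / 2 * μ * A₂ * (x + μ - 1) / |x + μ - 1| ^ 5) :=
    neg_nonneg.2 <| div_nonpos_of_nonpos_of_nonneg
      (mul_nonpos_of_nonneg_of_nonpos (by positivity) hu.le) (by positivity)
  simp only [gfun, Function.comp_apply, add_sub_assoc, mul_div_assoc] at hA₂ ⊢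
  linarith

end

theorem exists_L1_general
    (μ q₁ A₂ Mb T n : ℝ) (hμ : μ ∈ Set.Ioo (0 : ℝ) 1) (hq : 0 < q₁) (hA : 0 ≤ A₂)
    (hT : 0 < T) :
    ∃ x₀ : ℝ, -μ < x₀ ∧ x₀ < 1 - μ ∧
      deriv (fun s => Omega μ q₁ A₂ Mb T n s 0) x₀ = 0 ∧
      gfun μ q₁ A₂ Mb T n x₀ = 0 := by
  obtain ⟨hμ₀, hμ₁⟩ := hμ
  obtain ⟨x₀, ⟨hx₁, hx₂⟩, hx₀⟩ := exists_mem_Ioo_eq_zero_of_tendsto (by linarith : -μ < 1 - μ)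
    (fun x hx => (continuousAt_gfun hT.ne' (ne_of_gt (by linarith [hx.1]))
      (ne_of_lt (by linarith [hx.2]))).continuousWithinAt)
    (tendsto_gfun_nhdsGT_neg_atBot hμ₁ hq hT.ne') (tendsto_gfun_nhdsLT_one_sub_atTop hμ₀ hA hT.ne')
  refine ⟨x₀, hx₁, hx₂, ?_, hx₀⟩
  rw [(hasDerivAt_Omega_gfun hT.ne' (ne_of_gt (by linarith)) (ne_of_lt (by linarith))).deriv, hx₀]

/-- **Existence of the inner collinear point `L₁`.** There is `x₀` with `−μ < x₀ < 1−μ`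
such that `∂Ω/∂x(x₀, 0) = 0`, i.e. `g(x₀) = 0`. -/
theorem exists_L1
    (μ q₁ A₂ Mb T n : ℝ) (hμ : μ ∈ Set.Ioo (0 : ℝ) 1) (hq : 0 < q₁) (hA : 0 ≤ A₂)
    (hMb : 0 ≤ Mb) (hT : 0 < T) (hn : 0 < n) :
    ∃ x₀ : ℝ, -μ < x₀ ∧ x₀ < 1 - μ ∧
      deriv (fun s => Omega μ q₁ A₂ Mb T n s 0) x₀ = 0 ∧
      gfun μ q₁ A₂ Mb T n x₀ = 0 :=
  exists_L1_general μ q₁ A₂ Mb T n hμ hq hA hT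
end

section
/- Existence of the collinear equilibrium point L₃: assume μ ∈ (0,1), q₁ > 0, A₂ ≥ 0, M_b ≥ 0, T > 0 and n > 0. Then there exists x₀ with x₀ < −μ such that ∂Ω/∂x(x₀, 0) = 0, i.e. g(x₀) = 0 where g(x) = n²x − (1−μ)q₁(x+μ)/|x+μ|³ − μ(x+μ−1)/|x+μ−1|³ − (3/2)μA₂(x+μ−1)/|x+μ−1|⁵ − M_b x/(x²+T²)^{3/2}. (The proof follows from the intermediate value theorem, since g(x) → +∞ as x → (−μ)⁻ and g(x) → −∞ as x → −∞.) -/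
/-!
On the half-line `x < -μ`, beyond the radiating primary, `g` is continuous. Near `-μ` the
attraction `(1 - μ) q₁ / (x + μ)²` of that primary dominates, so `g → +∞` as `x → -μ⁻`; far
out every attraction is bounded while the centrifugal term `n² x` is not, so `g → -∞` as
`x → -∞`. The intermediate value theorem gives a zero `x₀ < -μ`, and there `g` is the
derivative of `x ↦ Ω(x, 0)`, since on the axis `√(u² + 0²) = |u|`.
-/

open Filter Topology Set

theorem abs_div_pow_le_one {t s : ℝ} {k : ℕ} (hs : 1 ≤ s) (hts : |t| ≤ s) (hk : k ≠ 0) :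
    |t / s ^ k| ≤ 1 := by
  have hs₀ : 0 < s ^ k := by positivity
  rw [abs_div, abs_of_pos hs₀, div_le_one hs₀]
  exact hts.trans (le_self_pow₀ hs hk)

theorem neg_mul_le_abs_of_abs_le_one {a u : ℝ} (hu : |u| ≤ 1) : -(a * u) ≤ |a| :=
  calc -(a * u) ≤ |a * u| := neg_le_abs _
    _ = |a| * |u| := abs_mul a u
    _ ≤ |a| := mul_le_of_le_one_right (abs_nonneg a) hu

theorem tendsto_neg_div_abs_pow_three_nhdsLT (c : ℝ) :
    Tendsto (fun x => -(x + c) / |x + c| ^ 3) (𝓝[<] (-c)) atTop := by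
  have hsq : Tendsto (fun x => (x + c) ^ 2) (𝓝[<] (-c)) (𝓝[>] 0) := by
    refine tendsto_nhdsWithin_of_tendsto_nhds_of_eventually_within _ ?_ ?_
    · have : Continuous fun x : ℝ => (x + c) ^ 2 := by fun_prop
      simpa using (this.tendsto (-c)).mono_left nhdsWithin_le_nhds
    · filter_upwards [self_mem_nhdsWithin] with x hx
      exact sq_pos_of_neg (show x + c < 0 by linarith [mem_Iio.1 hx])
  refine (tendsto_inv_nhdsGT_zero.comp hsq).congr' ?_
  filter_upwards [self_mem_nhdsWithin] with x hx
  have hneg : x + c < 0 := by linarith [mem_Iio.1 hx]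
  rw [Function.comp_apply, abs_of_neg hneg]
  field_simp

theorem hasDerivAt_inv_sqrt_sq_add_pow (k : ℕ) {c x : ℝ} (h : 0 < x ^ 2 + c) :
    HasDerivAt (fun s => (√(s ^ 2 + c) ^ (k + 1))⁻¹)
      (-((k + 1) * x) / √(x ^ 2 + c) ^ (k + 3)) x := by
  have hr : 0 < √(x ^ 2 + c) := Real.sqrt_pos.2 h
  have hsqrt : HasDerivAt (fun s => √(s ^ 2 + c)) (x / √(x ^ 2 + c)) x := by
    convert ((hasDerivAt_pow 2 x).add_const c).sqrt h.ne' using 1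
    field_simp
    ring
  refine ((hsqrt.fun_pow (k + 1)).inv (by positivity)).congr_deriv ?_
  rw [Nat.add_sub_cancel]
  push_cast
  field_simp
  ring

section Chermnykh

variable {μ q₁ A₂ Mb T n : ℝ}

theorem hasDerivAt_Omega_axis {x : ℝ} (h₁ : x + μ ≠ 0) (h₂ : x + μ - 1 ≠ 0)
    (hT : 0 < x ^ 2 + T ^ 2) :
    HasDerivAt (fun s => Omega μ q₁ A₂ Mb T n s 0) (gfun μ q₁ A₂ Mb T n x) x := by
  rw [add_sub_assoc] at h₂
  have hterm (k : ℕ) (a c : ℝ) (h : 0 < (x + a) ^ 2 + c) :=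
    (hasDerivAt_inv_sqrt_sq_add_pow k h).comp_add_const x a
  have hkin := ((hasDerivAt_pow 2 x).add_const (0 ^ 2 : ℝ)).const_mul (n ^ 2 / 2)
  have hr₁ := hterm 0 μ (0 ^ 2) (by positivity)
  have hr₂ := hterm 0 (μ - 1) (0 ^ 2) (by positivity)
  have hobl := hterm 2 (μ - 1) (0 ^ 2) (by positivity)
  have hbelt := hterm 0 0 (T ^ 2) (by simpa using hT)
  refine ((((hkin.add (hr₁.const_mul ((1 - μ) * q₁))).add (hr₂.const_mul μ)).add
    (hobl.const_mul (μ * A₂ / 2))).add (hbelt.const_mul Mb)).congr_deriv ?_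
    |>.congr_of_eventuallyEq (.of_forall fun s => ?_)
  · norm_num [gfun, Real.sqrt_sq_eq_abs, add_sub_assoc]
    ring
  · norm_num [Omega, add_sub_assoc]
    ring

theorem continuousOn_gfun (hμ : 0 < μ) : ContinuousOn (gfun μ q₁ A₂ Mb T n) (Iio (-μ)) := by
  intro x hx
  have h₁ : x + μ ≠ 0 := by linarith [mem_Iio.1 hx]
  have h₂ : x + μ - 1 ≠ 0 := by linarith [mem_Iio.1 hx]
  have h₃ : x ≠ 0 := by linarith [mem_Iio.1 hx]
  apply ContinuousAt.continuousWithinAt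
  unfold gfun
  fun_prop (disch := first | positivity | simp [*])

theorem gfun_le_of_le_neg_sub_one (hμ : 0 ≤ μ) {x : ℝ} (hx : x ≤ -μ - 1) :
    gfun μ q₁ A₂ Mb T n x ≤ n ^ 2 * x + (|(1 - μ) * q₁| + |μ| + |3 / 2 * μ * A₂| + |Mb|) := by
  have hsplit : gfun μ q₁ A₂ Mb T n x = n ^ 2 * x - (1 - μ) * q₁ * ((x + μ) / |x + μ| ^ 3)
      - μ * ((x + μ - 1) / |x + μ - 1| ^ 3) - 3 / 2 * μ * A₂ * ((x + μ - 1) / |x + μ - 1| ^ 5)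
      - Mb * (x / √(x ^ 2 + T ^ 2) ^ 3) := by
    unfold gfun; ring
  have hx₁ : 1 ≤ |x + μ| := le_abs.2 (.inr (by linarith))
  have hx₂ : 1 ≤ |x + μ - 1| := le_abs.2 (.inr (by linarith))
  have hx₃ : 1 ≤ |x| := le_abs.2 (.inr (by linarith))
  have hsqrt : |x| ≤ √(x ^ 2 + T ^ 2) := Real.abs_le_sqrt (by nlinarith)
  have b₁ := abs_div_pow_le_one hx₁ le_rfl three_ne_zero
  have b₂ := abs_div_pow_le_one hx₂ le_rfl three_ne_zero
  have b₃ := abs_div_pow_le_one hx₂ le_rfl (show 5 ≠ 0 by norm_num)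
  have b₄ := abs_div_pow_le_one (hx₃.trans hsqrt) hsqrt three_ne_zero
  rw [hsplit]
  linarith [neg_mul_le_abs_of_abs_le_one (a := (1 - μ) * q₁) b₁,
    neg_mul_le_abs_of_abs_le_one (a := μ) b₂, neg_mul_le_abs_of_abs_le_one (a := 3 / 2 * μ * A₂) b₃,
    neg_mul_le_abs_of_abs_le_one (a := Mb) b₄]

theorem tendsto_gfun_atBot (hμ : 0 ≤ μ) (hn : n ≠ 0) :
    Tendsto (gfun μ q₁ A₂ Mb T n) atBot atBot := by
  refine tendsto_atBot_mono' _ ?_ <|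
    tendsto_atBot_add_const_right _ (|(1 - μ) * q₁| + |μ| + |3 / 2 * μ * A₂| + |Mb|) <|
    tendsto_id.const_mul_atBot (by positivity : 0 < n ^ 2)
  filter_upwards [eventually_le_atBot (-μ - 1)] with x hx using gfun_le_of_le_neg_sub_one hμ hx

theorem tendsto_gfun_nhdsLT (hμ : μ ≠ 0) (hq : 0 < (1 - μ) * q₁) :
    Tendsto (gfun μ q₁ A₂ Mb T n) (𝓝[<] (-μ)) atTop := by
  set R : ℝ → ℝ := fun x => n ^ 2 * x - μ * (x + μ - 1) / |x + μ - 1| ^ 3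
    - (3 / 2) * μ * A₂ * (x + μ - 1) / |x + μ - 1| ^ 5 - Mb * x / √(x ^ 2 + T ^ 2) ^ 3
  have hR : ContinuousAt R (-μ) := by
    have hsqrt : √(μ ^ 2 + T ^ 2) ≠ 0 := by positivity
    simp only [R]
    fun_prop (disch := simp [hsqrt])
  refine (((tendsto_neg_div_abs_pow_three_nhdsLT μ).const_mul_atTop hq).atTop_add
    (hR.tendsto.mono_left nhdsWithin_le_nhds)).congr fun x => ?_
  simp only [R, gfun]
  ring

end Chermnykh

theorem exists_L3_general
    (μ q₁ A₂ Mb T n : ℝ) (hμ : μ ∈ Set.Ioo (0 : ℝ) 1) (hq : 0 < q₁) (hn : 0 < n) :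
    ∃ x₀ : ℝ, x₀ < -μ ∧
      deriv (fun s => Omega μ q₁ A₂ Mb T n s 0) x₀ = 0 ∧
      gfun μ q₁ A₂ Mb T n x₀ = 0 := by
  obtain ⟨hμ₀, hμ₁⟩ := hμ
  obtain ⟨x₀, hx₀, hg⟩ := isPreconnected_Iio.intermediate_value_Iii (l₂ := 𝓝[<] (-μ))
    (f := gfun μ q₁ A₂ Mb T n) (le_principal_iff.2 (Iio_mem_atBot (-μ))) inf_le_right
    (continuousOn_gfun hμ₀) (tendsto_gfun_atBot hμ₀.le hn.ne')
    (tendsto_gfun_nhdsLT hμ₀.ne' (mul_pos (sub_pos.2 hμ₁) hq)) (mem_univ 0)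
  rw [mem_Iio] at hx₀
  refine ⟨x₀, hx₀, ?_, hg⟩
  rw [(hasDerivAt_Omega_axis (by linarith) (by linarith) (by nlinarith)).deriv, hg]

/-- **Existence of the collinear point `L₃`.** There is `x₀` with `x₀ < −μ`
such that `∂Ω/∂x(x₀, 0) = 0`, i.e. `g(x₀) = 0`. -/
theorem exists_L3
    (μ q₁ A₂ Mb T n : ℝ) (hμ : μ ∈ Set.Ioo (0 : ℝ) 1) (hq : 0 < q₁) (hA : 0 ≤ A₂)
    (hMb : 0 ≤ Mb) (hT : 0 < T) (hn : 0 < n) :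
    ∃ x₀ : ℝ, x₀ < -μ ∧
      deriv (fun s => Omega μ q₁ A₂ Mb T n s 0) x₀ = 0 ∧
      gfun μ q₁ A₂ Mb T n x₀ = 0 :=
  exists_L3_general μ q₁ A₂ Mb T n hμ hq hn
end
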